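/- Let u : [0,T] → H be absolutely continuous with u' ∈ L²(0,T;H), and for a time step τ > 0 with T/τ ∈ ℕ define the piecewise constant interpolant ū_τ(t) = u(kτ) for t ∈ ((k−1)τ, kτ] and the piecewise affine interpolant u_τ agreeing with u at nodes kτ. Then sup_{t∈(0,T]} ‖ū_τ(t) − u_τ(t)‖ ≤ τ^{1/2} ‖u'‖_{L²(0,T;H)}. -/

import Mathlib

/-!
On the cell `((k-1)τ, kτ]` containing `t`, the difference `ū_τ(t) - u_τ(t)` is the fraction
`(kτ - t)/τ ∈ [0, 1)` of the increment `u(kτ) - u((k-1)τ) = ∫ u'` over the cell, and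
Cauchy–Schwarz bounds that integral by `τ^{1/2}` times the `L²` norm of `u'` on the cell.
-/

open MeasureTheory

theorem integral_le_sqrt_measureReal_mul_sqrt_integral_sq {α : Type*} [MeasurableSpace α]
    {μ : Measure α} [IsFiniteMeasure μ] {f : α → ℝ} (hf_nonneg : 0 ≤ f)
    (hf : AEStronglyMeasurable f μ) (hf_sq : Integrable (fun x => f x ^ 2) μ) :
    ∫ x, f x ∂μ ≤ μ.real Set.univ ^ ((1:ℝ)/2) * (∫ x, f x ^ 2 ∂μ) ^ ((1:ℝ)/2) := by
  have hf_memLp : MemLp f (ENNReal.ofReal 2) μ := by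
    simpa using (memLp_two_iff_integrable_sq hf).2 hf_sq
  have hone_memLp : MemLp (fun _ => (1:ℝ)) (ENNReal.ofReal 2) μ := memLp_const 1
  have h := integral_mul_le_Lp_mul_Lq_of_nonneg Real.HolderConjugate.two_two
    (Filter.Eventually.of_forall hf_nonneg) (Filter.Eventually.of_forall fun _ => zero_le_one)
    hf_memLp hone_memLp
  simp only [mul_one, one_pow, integral_const, smul_eq_mul, Real.rpow_two] at h
  linarith [mul_comm ((∫ x, f x ^ 2 ∂μ) ^ ((1:ℝ)/2)) (μ.real Set.univ ^ ((1:ℝ)/2))]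

theorem norm_sub_le_sqrt_mul_sqrt_integral_sq {E : Type*} [NormedAddCommGroup E]
    [NormedSpace ℝ E] {u u' : ℝ → E} {a b : ℝ} (hab : a ≤ b)
    (hu : u b - u a = ∫ s in a..b, u' s)
    (hu' : IntegrableOn (fun s => ‖u' s‖ ^ 2) (Set.Icc a b)) :
    ‖u b - u a‖ ≤
      (b - a) ^ ((1:ℝ)/2) * (∫ s in Set.Icc a b, ‖u' s‖ ^ 2) ^ ((1:ℝ)/2) := by
  have hmeas : AEStronglyMeasurable (fun s => ‖u' s‖) (volume.restrict (Set.Icc a b)) := by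
    simpa only [Real.sqrt_sq (norm_nonneg _)] using
      hu'.aestronglyMeasurable.aemeasurable.sqrt.aestronglyMeasurable
  calc ‖u b - u a‖ ≤ ∫ s in a..b, ‖u' s‖ :=
        hu ▸ intervalIntegral.norm_integral_le_integral_norm hab
    _ = ∫ s in Set.Icc a b, ‖u' s‖ := by
      rw [intervalIntegral.integral_of_le hab, integral_Icc_eq_integral_Ioc]
    _ ≤ _ := integral_le_sqrt_measureReal_mul_sqrt_integral_sq (fun _ => norm_nonneg _) hmeas hu'
    _ = _ := by rw [measureReal_restrict_apply_univ, Real.volume_real_Icc_of_le hab]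

theorem norm_sub_convexCombination_le {E : Type*} [NormedAddCommGroup E] [NormedSpace ℝ E]
    (x y : E) {α β : ℝ} (hαβ : α + β = 1) (hβ₀ : 0 ≤ β) (hβ₁ : β ≤ 1) :
    ‖y - (α • y + β • x)‖ ≤ ‖y - x‖ := by
  have h : y - (α • y + β • x) = β • (y - x) := by
    rw [← sub_eq_of_eq_add' hαβ.symm]; module
  rw [h, norm_smul, Real.norm_of_nonneg hβ₀]
  exact mul_le_of_le_one_left (norm_nonneg _) hβ₁

theorem exists_nat_mem_Ioc_mul {τ t : ℝ} (hτ : 0 < τ) {N : ℕ}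
    (ht : t ∈ Set.Ioc 0 (N * τ)) :
    ∃ k : ℕ, 1 ≤ k ∧ k ≤ N ∧ t ∈ Set.Ioc ((k - 1 : ℝ) * τ) (k * τ) := by
  refine ⟨⌈t / τ⌉₊, Nat.one_le_iff_ne_zero.2 (Nat.ceil_pos.2 (div_pos ht.1 hτ)).ne',
    Nat.ceil_le.2 ((div_le_iff₀ hτ).2 ht.2), ?_, ?_⟩
  · rw [← lt_div_iff₀ hτ]
    linarith [Nat.ceil_lt_add_one (div_pos ht.1 hτ).le]
  · rw [← div_le_iff₀ hτ]
    exact Nat.le_ceil _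

theorem interpolants_close_general
    (H : Type*) [NormedAddCommGroup H] [InnerProductSpace ℝ H]
    (T τ : ℝ) (hτ : 0 < τ) (N : ℕ) (hN : T = N * τ)
    (u u' ubar ulin : ℝ → H)
    (hfund : ∀ t₁ t₂, t₁ ∈ Set.Icc 0 T → t₂ ∈ Set.Icc 0 T →
      u t₂ - u t₁ = ∫ s in t₁..t₂, u' s)
    (hL2 : IntegrableOn (fun s => ‖u' s‖ ^ 2) (Set.Icc 0 T))
    (hbar : ∀ k : ℕ, 1 ≤ k → k ≤ N → ∀ t ∈ Set.Ioc ((k - 1 : ℝ) * τ) (k * τ),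
      ubar t = u (k * τ))
    (hlin : ∀ k : ℕ, 1 ≤ k → k ≤ N → ∀ t ∈ Set.Ioc ((k - 1 : ℝ) * τ) (k * τ),
      ulin t = ((t - (k - 1 : ℝ) * τ) / τ) • u (k * τ) + ((k * τ - t) / τ) • u ((k - 1 : ℝ) * τ)) :
    ∀ t ∈ Set.Ioc (0:ℝ) T,
      ‖ubar t - ulin t‖ ≤ τ ^ ((1:ℝ)/2) *
        (∫ s in Set.Icc 0 T, ‖u' s‖ ^ 2) ^ ((1:ℝ)/2) := by
  intro t ht
  obtain ⟨k, hk₁, hkN, htk⟩ := exists_nat_mem_Ioc_mul hτ (hN ▸ ht)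
  set a : ℝ := (k - 1 : ℝ) * τ
  set b : ℝ := k * τ
  have hba : b - a = τ := by ring
  have ha₀ : 0 ≤ a := mul_nonneg (by simpa using hk₁) hτ.le
  have hbT : b ≤ T := hN ▸ mul_le_mul_of_nonneg_right (Nat.cast_le.2 hkN) hτ.le
  have hab : a ≤ b := by linarith
  have hcell : Set.Icc a b ⊆ Set.Icc 0 T := Set.Icc_subset_Icc ha₀ hbT
  rw [hbar k hk₁ hkN t htk, hlin k hk₁ hkN t htk]
  calc _ ≤ ‖u b - u a‖ := norm_sub_convexCombination_le _ _
        (by field_simp; ring) (div_nonneg (by linarith [htk.2]) hτ.le)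
        ((div_le_one hτ).2 (by linarith [htk.1]))
    _ ≤ (b - a) ^ ((1:ℝ)/2) * (∫ s in Set.Icc a b, ‖u' s‖ ^ 2) ^ ((1:ℝ)/2) :=
        norm_sub_le_sqrt_mul_sqrt_integral_sq hab
          (hfund a b (hcell ⟨le_rfl, hab⟩) (hcell ⟨hab, le_rfl⟩)) (hL2.mono_set hcell)
    _ ≤ _ := by
        rw [hba]
        gcongr
        exact Filter.Eventually.of_forall fun _ => sq_nonneg _

/-- The piecewise constant and piecewise affine interpolants of an `H¹(0,T;H)` function
differ by at most `τ^{1/2} ‖u'‖_{L²(0,T;H)}`. -/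
theorem interpolants_close
    (H : Type*) [NormedAddCommGroup H] [InnerProductSpace ℝ H] [CompleteSpace H]
    (T τ : ℝ) (hT : 0 < T) (hτ : 0 < τ) (N : ℕ) (hN : T = N * τ)
    (u u' ubar ulin : ℝ → H)
    (hfund : ∀ t₁ t₂, t₁ ∈ Set.Icc 0 T → t₂ ∈ Set.Icc 0 T →
      u t₂ - u t₁ = ∫ s in t₁..t₂, u' s)
    (hL2 : IntegrableOn (fun s => ‖u' s‖ ^ 2) (Set.Icc 0 T))
    (hbar : ∀ k : ℕ, 1 ≤ k → k ≤ N → ∀ t ∈ Set.Ioc ((k - 1 : ℝ) * τ) (k * τ),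
      ubar t = u (k * τ))
    (hlin : ∀ k : ℕ, 1 ≤ k → k ≤ N → ∀ t ∈ Set.Ioc ((k - 1 : ℝ) * τ) (k * τ),
      ulin t = ((t - (k - 1 : ℝ) * τ) / τ) • u (k * τ) + ((k * τ - t) / τ) • u ((k - 1 : ℝ) * τ)) :
    ∀ t ∈ Set.Ioc (0:ℝ) T,
      ‖ubar t - ulin t‖ ≤ τ ^ ((1:ℝ)/2) *
        (∫ s in Set.Icc 0 T, ‖u' s‖ ^ 2) ^ ((1:ℝ)/2) :=
  interpolants_close_general H T τ hτ N hN u u' ubar ulin hfund hL2 hbar hlin
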